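/- On the ℂ-vector space W = (ℂ[x,x⁻¹] ⊗ tℂ[t]) ⊕ ℂC, the ℂ-bilinear bracket given by [x^α f(t), x^β g(t)] = x^{α+β}(β f′(t)g(t) − α f(t)g′(t)) + δ_{α+β,0}·((α³−α)/6)·Res_t(t^{−3} f(t) g(t))·C and [C, ·] = 0 defines a Lie algebra structure over ℂ, and the linear map sending L(α,i) ↦ x^α t^{i+1} and C ↦ C is an isomorphism of Lie algebras from 𝔅 onto W. -/

import Mathlib

/-- The Lie algebra `𝔅` of Block type: a complex Lie algebra `B` equipped with a basis
`{L α i : α ∈ ℤ, i ∈ ℕ} ∪ {C}` where `C` is central and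
`[L α i, L β j] = ((i+1)β − (j+1)α)·L (α+β) (i+j) + δ_{α+β,0}·δ_{i+j,0}·((α³−α)/6)·C`. -/
structure BlockData (B : Type) [LieRing B] [LieAlgebra ℂ B] where
  L : ℤ → ℕ → B
  C : B
  central : ∀ x : B, ⁅C, x⁆ = 0
  bracket_L : ∀ (α β : ℤ) (i j : ℕ),
    ⁅L α i, L β j⁆
      = (((i : ℂ) + 1) * (β : ℂ) - ((j : ℂ) + 1) * (α : ℂ)) • L (α + β) (i + j)
        + (if α + β = 0 ∧ i + j = 0 then ((α : ℂ) ^ 3 - (α : ℂ)) / 6 else 0) • C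
  indep : LinearIndependent ℂ (Sum.elim (fun p : ℤ × ℕ => L p.1 p.2) (fun _ : Unit => C))
  span_top : Submodule.span ℂ
      (Set.range (Sum.elim (fun p : ℤ × ℕ => L p.1 p.2) (fun _ : Unit => C))) = ⊤

variable {B : Type} [LieRing B] [LieAlgebra ℂ B]
variable {V : Type} [AddCommGroup V] [Module ℂ V] [LieRingModule B V] [LieModule ℂ B V]

/-- A `ℤ`-grading `V = ⊕ₖ Vₖ` on a `𝔅`-module, compatible with the grading of `𝔅`:
`𝔅^(α)·Vₖ ⊆ V_{α+k}` (where `𝔅^(α) = span{L α i : i ≥ 0} ⊕ δ_{α,0} ℂ C`). -/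
structure GradedBMod (𝔟 : BlockData B) (V : Type) [AddCommGroup V] [Module ℂ V]
    [LieRingModule B V] [LieModule ℂ B V] where
  piece : ℤ → Submodule ℂ V
  isInternal : DirectSum.IsInternal piece
  lie_L_mem : ∀ (α : ℤ) (i : ℕ) (k : ℤ) (v : V), v ∈ piece k → ⁅𝔟.L α i, v⁆ ∈ piece (α + k)
  lie_C_mem : ∀ (k : ℤ) (v : V), v ∈ piece k → ⁅𝔟.C, v⁆ ∈ piece k

/-- A Lie submodule is graded if it is the (direct) sum of its intersections with the
graded pieces. -/
def GradedBMod.IsGradedSubmodule {𝔟 : BlockData B} (gr : GradedBMod 𝔟 V)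
    (W : LieSubmodule ℂ B V) : Prop :=
  (W : Submodule ℂ V) = ⨆ k : ℤ, (W : Submodule ℂ V) ⊓ gr.piece k

/-- A graded module is (graded-)irreducible if it is nonzero and has no graded submodule
other than `0` and `V`. -/
def GradedBMod.Irreducible {𝔟 : BlockData B} (gr : GradedBMod 𝔟 V) : Prop :=
  (∃ v : V, v ≠ 0) ∧
    ∀ W : LieSubmodule ℂ B V, gr.IsGradedSubmodule W → W = ⊥ ∨ W = ⊤

/-- Quasifinite: all graded pieces are finite dimensional. -/
def GradedBMod.Quasifinite {𝔟 : BlockData B} (gr : GradedBMod 𝔟 V) : Prop :=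
  ∀ k : ℤ, FiniteDimensional ℂ (gr.piece k)

/-- Uniformly bounded: the dimensions of the graded pieces are uniformly bounded. -/
def GradedBMod.UniformlyBounded {𝔟 : BlockData B} (gr : GradedBMod 𝔟 V) : Prop :=
  ∃ N : ℕ, ∀ k : ℤ, Module.rank ℂ (gr.piece k) ≤ N

/-- A module of the intermediate series: all graded pieces have dimension at most one. -/
def GradedBMod.IntermediateSeries {𝔟 : BlockData B} (gr : GradedBMod 𝔟 V) : Prop :=
  ∀ k : ℤ, Module.rank ℂ (gr.piece k) ≤ 1

/-- Highest weight module: generated by a nonzero `v ∈ V₀` which is a common eigenvector of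
all `L 0 i` and of `C` and is annihilated by all `L α i` with `α > 0`. -/
def GradedBMod.IsHighestWeight {𝔟 : BlockData B} (gr : GradedBMod 𝔟 V) : Prop :=
  ∃ v : V, v ≠ 0 ∧ v ∈ gr.piece 0 ∧
    (∀ i : ℕ, ∃ c : ℂ, ⁅𝔟.L 0 i, v⁆ = c • v) ∧ (∃ c : ℂ, ⁅𝔟.C, v⁆ = c • v) ∧
    (∀ α : ℤ, 0 < α → ∀ i : ℕ, ⁅𝔟.L α i, v⁆ = 0) ∧
    LieSubmodule.lieSpan ℂ B {v} = ⊤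

/-- Lowest weight module. -/
def GradedBMod.IsLowestWeight {𝔟 : BlockData B} (gr : GradedBMod 𝔟 V) : Prop :=
  ∃ v : V, v ≠ 0 ∧ v ∈ gr.piece 0 ∧
    (∀ i : ℕ, ∃ c : ℂ, ⁅𝔟.L 0 i, v⁆ = c • v) ∧ (∃ c : ℂ, ⁅𝔟.C, v⁆ = c • v) ∧
    (∀ α : ℤ, α < 0 → ∀ i : ℕ, ⁅𝔟.L α i, v⁆ = 0) ∧
    LieSubmodule.lieSpan ℂ B {v} = ⊤

noncomputable section

open TensorProduct

/-- The space `tℂ[t]` of polynomials with zero constant term. -/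
def tPoly : Submodule ℂ (Polynomial ℂ) := LinearMap.ker (Polynomial.lcoeff ℂ 0)

/-- The space `W = ℂ[x,x⁻¹] ⊗ tℂ[t] ⊕ ℂC`. -/
abbrev Wspace : Type := (LaurentPolynomial ℂ ⊗[ℂ] ↥tPoly) × ℂ

lemma tPoly_bracket_mem (α β : ℤ) (f g : tPoly) :
    (β : ℂ) • (Polynomial.derivative (f : Polynomial ℂ) * (g : Polynomial ℂ))
      - (α : ℂ) • ((f : Polynomial ℂ) * Polynomial.derivative (g : Polynomial ℂ)) ∈ tPoly := by
  have hf : (f : Polynomial ℂ).coeff 0 = 0 := f.2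
  have hg : (g : Polynomial ℂ).coeff 0 = 0 := g.2
  simp [tPoly, LinearMap.mem_ker, Polynomial.lcoeff_apply, Polynomial.mul_coeff_zero, hf, hg]

lemma Xpow_mem_tPoly (i : ℕ) : (Polynomial.X ^ (i + 1) : Polynomial ℂ) ∈ tPoly := by
  simp [tPoly, LinearMap.mem_ker, Polynomial.lcoeff_apply, Polynomial.coeff_X_pow]

/-!
Transport the bracket of `𝔅` to `W` along the linear isomorphism sending the basis
`{L(α,i)} ∪ {C}` to the basis `{x^α t^{i+1}} ∪ {C}`; antisymmetry and the Jacobi identity are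
then inherited from `𝔅`. Both sides of the bracket formula are bilinear in `(f, g)`, so it
suffices to check it for `f = t^{i+1}`, `g = t^{j+1}`, where it becomes the defining bracket of
`𝔅`: the derivatives produce `(i+1)β − (j+1)α`, and `Res_t(t^{i+j−1}) = δ_{i+j,0}` produces the
central term.
-/

open Polynomial

section Transport

variable {R L M : Type*} [CommRing R] [LieRing L] [LieAlgebra R L] [AddCommGroup M] [Module R M]

def transportedBracket (e : L ≃ₗ[R] M) : M →ₗ[R] M →ₗ[R] M :=
  e.conj.toLinearMap ∘ₗ (LieModule.toEnd R L L : L →ₗ[R] Module.End R L) ∘ₗ e.symm.toLinearMap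

variable (e : L ≃ₗ[R] M)

lemma transportedBracket_apply (u v : M) :
    transportedBracket e u v = e ⁅e.symm u, e.symm v⁆ :=
  rfl

lemma map_lie_eq_transportedBracket (x y : L) :
    e ⁅x, y⁆ = transportedBracket e (e x) (e y) := by
  simp [transportedBracket_apply]

lemma transportedBracket_self (u : M) : transportedBracket e u u = 0 := by
  rw [transportedBracket_apply, lie_self, map_zero]

lemma transportedBracket_leibniz (u v w : M) :
    transportedBracket e u (transportedBracket e v w)
      = transportedBracket e (transportedBracket e u v) w
        + transportedBracket e v (transportedBracket e u w) := by
  simp only [transportedBracket_apply, LinearEquiv.symm_apply_apply]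
  rw [← map_add, leibniz_lie]

end Transport

def wittBracketPoly (α β : ℤ) : ℂ[X] →ₗ[ℂ] ℂ[X] →ₗ[ℂ] ℂ[X] :=
  (β : ℂ) • (LinearMap.mul ℂ ℂ[X]).compl₁₂ derivative LinearMap.id
    - (α : ℂ) • (LinearMap.mul ℂ ℂ[X]).compl₂ derivative

lemma wittBracketPoly_apply (α β : ℤ) (f g : ℂ[X]) :
    wittBracketPoly α β f g = (β : ℂ) • (derivative f * g) - (α : ℂ) • (f * derivative g) := by
  simp [wittBracketPoly]

def wittBracket (α β : ℤ) : tPoly →ₗ[ℂ] tPoly →ₗ[ℂ] tPoly :=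
  LinearMap.codRestrict₂ ((wittBracketPoly α β).compl₁₂ tPoly.subtype tPoly.subtype)
    tPoly.subtype Subtype.val_injective fun f g => by
      simpa [wittBracketPoly_apply] using tPoly_bracket_mem α β f g

lemma wittBracket_apply (α β : ℤ) (f g : tPoly) :
    wittBracket α β f g
      = ⟨(β : ℂ) • (derivative (f : ℂ[X]) * g) - (α : ℂ) • (f * derivative (g : ℂ[X])),
          tPoly_bracket_mem α β f g⟩ := by
  ext1
  exact (LinearMap.codRestrict₂_apply _ tPoly.subtype Subtype.val_injective _ f g).trans
    (wittBracketPoly_apply α β f g)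

def blockCocycle (α β : ℤ) : tPoly →ₗ[ℂ] tPoly →ₗ[ℂ] ℂ :=
  (if α + β = 0 then ((α : ℂ) ^ 3 - α) / 6 else 0) •
    ((LinearMap.mul ℂ ℂ[X]).compr₂ (lcoeff ℂ 2)).compl₁₂ tPoly.subtype tPoly.subtype

lemma blockCocycle_apply (α β : ℤ) (f g : tPoly) :
    blockCocycle α β f g
      = if α + β = 0 then ((α : ℂ) ^ 3 - α) / 6 * ((f : ℂ[X]) * g).coeff 2 else 0 := by
  split_ifs <;> simp [blockCocycle, *]

def mulXEquiv : ℂ[X] ≃ₗ[ℂ] tPoly :=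
  LinearEquiv.ofBijective
    { toFun f := ⟨X * f, by simp [tPoly]⟩
      map_add' f g := Subtype.ext (mul_add X f g)
      map_smul' c f := Subtype.ext (mul_smul_comm c X f) }
    ⟨fun f g h => mul_left_cancel₀ X_ne_zero (congrArg Subtype.val h), fun g => by
      obtain ⟨f, hf⟩ := X_dvd_iff.mpr g.2
      exact ⟨f, Subtype.ext hf.symm⟩⟩

def tPolyBasis : Module.Basis ℕ ℂ tPoly := (basisMonomials ℂ).map mulXEquiv

lemma tPolyBasis_apply (i : ℕ) : tPolyBasis i = ⟨X ^ (i + 1), Xpow_mem_tPoly i⟩ := by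
  ext1
  simp only [tPolyBasis, Module.Basis.map_apply, coe_basisMonomials, ← X_pow_eq_monomial,
    pow_succ']
  rfl

lemma wittBracket_tPolyBasis (α β : ℤ) (i j : ℕ) :
    wittBracket α β (tPolyBasis i) (tPolyBasis j)
      = (((i : ℂ) + 1) * β - ((j : ℂ) + 1) * α) • tPolyBasis (i + j) := by
  ext1
  simp only [wittBracket_apply, tPolyBasis_apply, derivative_X_pow, SetLike.val_smul,
    Nat.add_sub_cancel, smul_eq_C_mul]
  push_cast
  simp only [map_add, map_sub, map_mul, map_one]
  ring

lemma blockCocycle_tPolyBasis (α β : ℤ) (i j : ℕ) :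
    blockCocycle α β (tPolyBasis i) (tPolyBasis j)
      = if α + β = 0 ∧ i + j = 0 then ((α : ℂ) ^ 3 - α) / 6 else 0 := by
  rw [blockCocycle_apply, tPolyBasis_apply, tPolyBasis_apply, ← pow_add, coeff_X_pow]
  by_cases hαβ : α + β = 0 <;> by_cases hij : i + j = 0 <;>
    simp [hαβ, hij, show (2 = i + 1 + (j + 1)) ↔ i + j = 0 by omega]

def wspaceBasis : Module.Basis ((ℤ × ℕ) ⊕ Unit) ℂ Wspace :=
  ((AddMonoidAlgebra.basis ℤ ℂ).tensorProduct tPolyBasis).prod (Module.Basis.singleton Unit ℂ)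

lemma wspaceBasis_inl (α : ℤ) (i : ℕ) :
    wspaceBasis (Sum.inl (α, i)) = (LaurentPolynomial.T α ⊗ₜ[ℂ] tPolyBasis i, 0) := by
  simp [wspaceBasis, Module.Basis.prod_apply, Module.Basis.tensorProduct_apply]

lemma wspaceBasis_inr : wspaceBasis (Sum.inr ()) = (0, 1) := by
  simp [wspaceBasis, Module.Basis.prod_apply]

namespace BlockData

variable (𝔟 : BlockData B)

def basis : Module.Basis ((ℤ × ℕ) ⊕ Unit) ℂ B :=
  Module.Basis.mk 𝔟.indep 𝔟.span_top.ge

def wspaceEquiv : B ≃ₗ[ℂ] Wspace :=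
  𝔟.basis.equiv wspaceBasis (Equiv.refl _)

lemma wspaceEquiv_basis (p : (ℤ × ℕ) ⊕ Unit) : 𝔟.wspaceEquiv (𝔟.basis p) = wspaceBasis p :=
  𝔟.basis.equiv_apply p wspaceBasis (Equiv.refl _)

lemma wspaceEquiv_L (α : ℤ) (i : ℕ) :
    𝔟.wspaceEquiv (𝔟.L α i) = wspaceBasis (Sum.inl (α, i)) := by
  rw [← 𝔟.wspaceEquiv_basis, basis, Module.Basis.mk_apply]
  rfl

lemma wspaceEquiv_C : 𝔟.wspaceEquiv 𝔟.C = wspaceBasis (Sum.inr ()) := by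
  rw [← 𝔟.wspaceEquiv_basis, basis, Module.Basis.mk_apply]
  rfl

lemma transportedBracket_wspaceBasis (α β : ℤ) (i j : ℕ) :
    transportedBracket 𝔟.wspaceEquiv (wspaceBasis (Sum.inl (α, i)))
        (wspaceBasis (Sum.inl (β, j)))
      = (LaurentPolynomial.T (α + β) ⊗ₜ[ℂ] wittBracket α β (tPolyBasis i) (tPolyBasis j),
         blockCocycle α β (tPolyBasis i) (tPolyBasis j)) := by
  rw [← 𝔟.wspaceEquiv_L, ← 𝔟.wspaceEquiv_L, ← map_lie_eq_transportedBracket, 𝔟.bracket_L,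
    map_add, map_smul, map_smul, 𝔟.wspaceEquiv_L, 𝔟.wspaceEquiv_C, wspaceBasis_inl, wspaceBasis_inr,
    wittBracket_tPolyBasis, blockCocycle_tPolyBasis, TensorProduct.tmul_smul]
  ext <;> split_ifs <;> simp

lemma transportedBracket_T_tmul (α β : ℤ) (f g : tPoly) :
    transportedBracket 𝔟.wspaceEquiv (LaurentPolynomial.T α ⊗ₜ[ℂ] f, 0)
        (LaurentPolynomial.T β ⊗ₜ[ℂ] g, 0)
      = (LaurentPolynomial.T (α + β) ⊗ₜ[ℂ] wittBracket α β f g, blockCocycle α β f g) := by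
  let incl (γ : ℤ) : tPoly →ₗ[ℂ] Wspace :=
    LinearMap.inl ℂ _ ℂ ∘ₗ TensorProduct.mk ℂ _ tPoly (LaurentPolynomial.T γ)
  have key : (transportedBracket 𝔟.wspaceEquiv ∘ₗ incl α).compl₂ (incl β)
      = (wittBracket α β).compr₂ (incl (α + β))
        + (blockCocycle α β).compr₂ (LinearMap.inr ℂ _ ℂ) := by
    refine LinearMap.ext_basis tPolyBasis tPolyBasis fun i j => ?_
    simpa [incl, ← wspaceBasis_inl] using 𝔟.transportedBracket_wspaceBasis α β i j
  simpa [incl] using LinearMap.congr_fun₂ key f g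

end BlockData

/-- On `W = (ℂ[x,x⁻¹] ⊗ tℂ[t]) ⊕ ℂC`, the ℂ-bilinear bracket given by
`[x^α f(t), x^β g(t)] = x^{α+β}(β f′g − α f g′) + δ_{α+β,0}·((α³−α)/6)·Res_t(t^{−3} f g)·C`
and `[C, ·] = 0` defines a Lie algebra structure over ℂ, and the linear map sending
`L(α,i) ↦ x^α t^{i+1}` and `C ↦ C` is an isomorphism of Lie algebras from `𝔅` onto `W`. -/
theorem block_realization (𝔟 : BlockData B) :
    ∃ b : Wspace →ₗ[ℂ] Wspace →ₗ[ℂ] Wspace,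
      (∀ (α β : ℤ) (f g : tPoly),
        b (LaurentPolynomial.T α ⊗ₜ[ℂ] f, 0) (LaurentPolynomial.T β ⊗ₜ[ℂ] g, 0)
          = (LaurentPolynomial.T (α + β) ⊗ₜ[ℂ]
              (⟨(β : ℂ) • (Polynomial.derivative (f : Polynomial ℂ) * (g : Polynomial ℂ))
                  - (α : ℂ) • ((f : Polynomial ℂ)
                      * Polynomial.derivative (g : Polynomial ℂ)),
                tPoly_bracket_mem α β f g⟩ : tPoly),
             if α + β = 0 then
               ((α : ℂ) ^ 3 - (α : ℂ)) / 6 * (((f : Polynomial ℂ) * (g : Polynomial ℂ)).coeff 2)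
             else 0)) ∧
      (∀ w : Wspace, b (0, 1) w = 0) ∧
      (∀ w : Wspace, b w w = 0) ∧
      (∀ u v w : Wspace, b u (b v w) = b (b u v) w + b v (b u w)) ∧
      ∃ e : B ≃ₗ[ℂ] Wspace,
        (∀ u v : B, e ⁅u, v⁆ = b (e u) (e v)) ∧
        (∀ (α : ℤ) (i : ℕ),
          e (𝔟.L α i)
            = (LaurentPolynomial.T α ⊗ₜ[ℂ]
                (⟨Polynomial.X ^ (i + 1), Xpow_mem_tPoly i⟩ : tPoly), 0)) ∧
        e 𝔟.C = (0, 1) := by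
  refine ⟨transportedBracket 𝔟.wspaceEquiv, fun α β f g => ?_, fun w => ?_,
    transportedBracket_self _, transportedBracket_leibniz _, 𝔟.wspaceEquiv,
    map_lie_eq_transportedBracket _, fun α i => ?_, ?_⟩
  · rw [𝔟.transportedBracket_T_tmul, wittBracket_apply, blockCocycle_apply]
  · rw [← wspaceBasis_inr, ← 𝔟.wspaceEquiv_C, transportedBracket_apply,
      LinearEquiv.symm_apply_apply, 𝔟.central, map_zero]
  · rw [𝔟.wspaceEquiv_L, wspaceBasis_inl, tPolyBasis_apply]
  · rw [𝔟.wspaceEquiv_C, wspaceBasis_inr]
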